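/- arXiv:1904.08204 — 2 statements merged into one kernel-verified Lean document; each statement's English description precedes it below -/
import Mathlib

section
/- For any T ≥ 1 and reals 2 ≤ x ≤ y, we have (1/T) ∫_T^{2T} (Re ∑_{x ≤ p ≤ y, p prime} p^{-1/2-it})² dt = (1/2)·∑_{x ≤ p ≤ y, p prime} 1/p + O(y²/T), with an absolute implied constant. -/
/-!
Since `Re p^(-1/2-it) = p^(-1/2) cos(t log p)`, the integrand is the square of a cosine
polynomial. By the product-to-sum formula, `∫ cos(at) cos(bt)` over any interval equals half its
length when `a = b`, up to `O(1/|a - b| + 1/|a + b|)` in every case. The frequencies `log p`,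
`p ≤ y`, are `1/y`-separated and at least `log 2`, so the total error is at most
`(∑ p^(-1/2))² (y + O(1)) ≤ 4y (y + 1)`.
-/

open Complex MeasureTheory

/-- The finite set of primes `p` with `x ≤ p ≤ y`. -/
noncomputable def primesIn (x y : ℝ) : Finset ℕ :=
  (Finset.range (⌊y⌋₊ + 1)).filter fun p => p.Prime ∧ x ≤ (p : ℝ) ∧ (p : ℝ) ≤ y

lemma re_ofReal_cpow {r : ℝ} (hr : 0 < r) (s : ℂ) :
    ((r : ℂ) ^ s).re = r ^ s.re * Real.cos (s.im * Real.log r) := by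
  rw [cpow_def_of_ne_zero (ofReal_ne_zero.2 hr.ne'), ← ofReal_log hr.le, exp_re,
    re_ofReal_mul, im_ofReal_mul, Real.rpow_def_of_pos hr, mul_comm s.im]

lemma abs_integral_cos_mul_le {c : ℝ} (hc : c ≠ 0) (u v : ℝ) :
    |∫ t in u..v, Real.cos (c * t)| ≤ 2 / |c| := by
  rw [intervalIntegral.integral_comp_mul_left Real.cos hc, integral_cos, smul_eq_mul, abs_mul,
    abs_inv, div_eq_inv_mul]
  gcongr
  calc |Real.sin (c * v) - Real.sin (c * u)| ≤ |Real.sin (c * v)| + |Real.sin (c * u)| :=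
        abs_sub _ _
    _ ≤ 2 := by linarith [Real.abs_sin_le_one (c * v), Real.abs_sin_le_one (c * u)]

lemma integral_cos_mul_mul_cos_mul (a b u v : ℝ) :
    ∫ t in u..v, Real.cos (a * t) * Real.cos (b * t)
      = ((∫ t in u..v, Real.cos ((a - b) * t)) + ∫ t in u..v, Real.cos ((a + b) * t)) / 2 := by
  have hcos : ∀ c : ℝ, IntervalIntegrable (fun t => Real.cos (c * t)) volume u v := fun c =>
    (Real.continuous_cos.comp (continuous_const_mul c)).intervalIntegrable u v
  rw [← intervalIntegral.integral_add (hcos _) (hcos _), ← intervalIntegral.integral_div]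
  congr 1 with t
  rw [sub_mul, add_mul, Real.cos_sub, Real.cos_add]
  ring

lemma abs_integral_cos_mul_mul_cos_mul_le {a b : ℝ} (hab : a ≠ b) (hab' : a + b ≠ 0) (u v : ℝ) :
    |∫ t in u..v, Real.cos (a * t) * Real.cos (b * t)| ≤ 1 / |a - b| + 1 / |a + b| := by
  rw [integral_cos_mul_mul_cos_mul, abs_div, abs_two]
  have h₁ := abs_integral_cos_mul_le (sub_ne_zero.2 hab) u v
  have h₂ := abs_integral_cos_mul_le hab' u v
  have := abs_add_le (∫ t in u..v, Real.cos ((a - b) * t)) (∫ t in u..v, Real.cos ((a + b) * t))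
  rw [div_le_iff₀ two_pos]
  calc _ ≤ 2 / |a - b| + 2 / |a + b| := by linarith
    _ = _ := by ring

lemma abs_integral_cos_mul_mul_self_sub_le {a : ℝ} (ha : a + a ≠ 0) (u v : ℝ) :
    |(∫ t in u..v, Real.cos (a * t) * Real.cos (a * t)) - (v - u) / 2| ≤ 1 / |a + a| := by
  have h := abs_integral_cos_mul_le ha u v
  rw [integral_cos_mul_mul_cos_mul, sub_self]
  simp only [zero_mul, Real.cos_zero, intervalIntegral.integral_const, smul_eq_mul, mul_one]
  rw [show (v - u + ∫ t in u..v, Real.cos ((a + a) * t)) / 2 - (v - u) / 2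
      = (∫ t in u..v, Real.cos ((a + a) * t)) / 2 by ring, abs_div, abs_two]
  calc _ ≤ 2 / |a + a| / 2 := by gcongr
    _ = _ := by ring

lemma integral_sq_finsetSum {ι : Type*} (s : Finset ι) {f : ι → ℝ → ℝ}
    (hf : ∀ i ∈ s, Continuous (f i)) (u v : ℝ) :
    ∫ t in u..v, (∑ i ∈ s, f i t) ^ 2 = ∑ i ∈ s, ∑ j ∈ s, ∫ t in u..v, f i t * f j t := by
  simp_rw [sq, Finset.sum_mul_sum]
  have hcont : ∀ i ∈ s, ∀ j ∈ s, Continuous fun t => f i t * f j t :=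
    fun i hi j hj => (hf i hi).mul (hf j hj)
  rw [intervalIntegral.integral_finsetSum (f := fun i t => ∑ j ∈ s, f i t * f j t) fun i hi =>
    (continuous_finsetSum s (hcont i hi)).intervalIntegrable u v]
  exact Finset.sum_congr rfl fun i hi => intervalIntegral.integral_finsetSum
    (f := fun j t => f i t * f j t) fun j hj => (hcont i hi j hj).intervalIntegrable u v

theorem abs_integral_sq_sum_cos_sub_le {ι : Type*} (s : Finset ι) (c ω : ι → ℝ) {ω₀ δ : ℝ}
    (hω₀ : 0 < ω₀) (hω : ∀ i ∈ s, ω₀ ≤ ω i) (hδ : 0 < δ)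
    (hsep : ∀ i ∈ s, ∀ j ∈ s, i ≠ j → δ ≤ |ω i - ω j|) (u v : ℝ) :
    |(∫ t in u..v, (∑ i ∈ s, c i * Real.cos (ω i * t)) ^ 2) - (v - u) / 2 * ∑ i ∈ s, c i ^ 2|
      ≤ (∑ i ∈ s, |c i|) ^ 2 * (δ⁻¹ + (2 * ω₀)⁻¹) := by
  classical
  set I : ι → ι → ℝ := fun i j => ∫ t in u..v, Real.cos (ω i * t) * Real.cos (ω j * t)
  set D : ι → ι → ℝ := fun i j => if i = j then (v - u) / 2 else 0
  have hsum_inv : ∀ i ∈ s, ∀ j ∈ s, 1 / |ω i + ω j| ≤ (2 * ω₀)⁻¹ := fun i hi j hj => by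
    rw [one_div, abs_of_pos (by linarith [hω i hi, hω j hj])]
    exact inv_anti₀ (by positivity) (by linarith [hω i hi, hω j hj])
  have hpair : ∀ i ∈ s, ∀ j ∈ s, |I i j - D i j| ≤ δ⁻¹ + (2 * ω₀)⁻¹ := by
    intro i hi j hj
    have hpos : ω i + ω j ≠ 0 := by linarith [hω i hi, hω j hj]
    by_cases hij : i = j
    · subst hij
      simp only [D, if_pos rfl]
      linarith [abs_integral_cos_mul_mul_self_sub_le hpos u v, hsum_inv i hi i hi, inv_pos.2 hδ]
    · have hgap := hsep i hi j hj hij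
      have hne : ω i ≠ ω j := fun h => by rw [h, sub_self, abs_zero] at hgap; linarith
      have hdiff : 1 / |ω i - ω j| ≤ δ⁻¹ := by
        rw [one_div]; exact inv_anti₀ hδ hgap
      simp only [D, if_neg hij, sub_zero]
      linarith [abs_integral_cos_mul_mul_cos_mul_le hne hpos u v, hsum_inv i hi j hj]
  have hexpand : (∫ t in u..v, (∑ i ∈ s, c i * Real.cos (ω i * t)) ^ 2)
      - (v - u) / 2 * ∑ i ∈ s, c i ^ 2 = ∑ i ∈ s, ∑ j ∈ s, c i * c j * (I i j - D i j) := by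
    rw [integral_sq_finsetSum s (fun i _ => by fun_prop)]
    simp only [D, mul_sub, Finset.sum_sub_distrib, mul_ite, mul_zero, Finset.sum_ite_eq,
      Finset.mul_sum]
    congr 1
    · refine Finset.sum_congr rfl fun i _ => Finset.sum_congr rfl fun j _ => ?_
      rw [← intervalIntegral.integral_const_mul]
      congr 1 with t
      ring
    · exact Finset.sum_congr rfl fun i hi => by rw [if_pos hi]; ring
  rw [hexpand, sq, Finset.sum_mul_sum, Finset.sum_mul]
  refine (Finset.abs_sum_le_sum_abs _ _).trans (Finset.sum_le_sum fun i hi => ?_)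
  rw [Finset.sum_mul]
  refine (Finset.abs_sum_le_sum_abs _ _).trans (Finset.sum_le_sum fun j hj => ?_)
  rw [abs_mul, abs_mul]
  exact mul_le_mul_of_nonneg_left (hpair i hi j hj) (by positivity)

lemma inv_le_log_sub_log {m n : ℕ} (hm : 0 < m) (hmn : m < n) :
    (n : ℝ)⁻¹ ≤ Real.log n - Real.log m := by
  have hm' : (0 : ℝ) < m := by exact_mod_cast hm
  have hn' : (0 : ℝ) < n := by exact_mod_cast hm.trans hmn
  have hmn' : (m : ℝ) + 1 ≤ n := by exact_mod_cast hmn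
  calc (n : ℝ)⁻¹ ≤ 1 - ((n : ℝ) / m)⁻¹ := by
        rw [inv_div, le_sub_iff_add_le, inv_eq_one_div, ← add_div, div_le_one hn']
        linarith
    _ ≤ Real.log ((n : ℝ) / m) := Real.one_sub_inv_le_log_of_pos (by positivity)
    _ = Real.log n - Real.log m := Real.log_div hn'.ne' hm'.ne'

lemma inv_le_abs_log_sub_log {m n : ℕ} {y : ℝ} (hm : 0 < m) (hn : 0 < n) (hmn : m ≠ n)
    (hmy : (m : ℝ) ≤ y) (hny : (n : ℝ) ≤ y) : y⁻¹ ≤ |Real.log m - Real.log n| := by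
  rcases hmn.lt_or_gt with h | h
  · rw [abs_sub_comm]
    exact (inv_anti₀ (by exact_mod_cast hn) hny).trans
      ((inv_le_log_sub_log hm h).trans (le_abs_self _))
  · exact (inv_anti₀ (by exact_mod_cast hm) hmy).trans
      ((inv_le_log_sub_log hn h).trans (le_abs_self _))

lemma inv_sqrt_add_one_le {x : ℝ} (hx : 0 ≤ x) : (√(x + 1))⁻¹ ≤ 2 * (√(x + 1) - √x) := by
  have h₁ : 0 < √(x + 1) := Real.sqrt_pos.2 (by linarith)
  have h₂ : √x ≤ √(x + 1) := Real.sqrt_le_sqrt (by linarith)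
  rw [inv_le_iff_one_le_mul₀' h₁]
  nlinarith [Real.sq_sqrt hx, Real.sq_sqrt (show 0 ≤ x + 1 by linarith), Real.sqrt_nonneg x]

lemma sum_range_inv_sqrt_le (N : ℕ) : ∑ n ∈ Finset.range (N + 1), (√n)⁻¹ ≤ 2 * √N := by
  rw [Finset.sum_range_succ']
  calc ∑ n ∈ Finset.range N, (√(n + 1 : ℕ))⁻¹ + (√(0 : ℕ))⁻¹
      ≤ ∑ n ∈ Finset.range N, 2 * (√(n + 1 : ℕ) - √n) := by
        simp only [Nat.cast_zero, Real.sqrt_zero, inv_zero, add_zero, Nat.cast_succ]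
        exact Finset.sum_le_sum fun n _ => inv_sqrt_add_one_le n.cast_nonneg
    _ = 2 * √N := by
        rw [← Finset.mul_sum, Finset.sum_range_sub (fun n => √n), Nat.cast_zero, Real.sqrt_zero,
          sub_zero]

lemma sum_primesIn_inv_sqrt_le (x : ℝ) {y : ℝ} (hy : 0 ≤ y) :
    ∑ p ∈ primesIn x y, (√p)⁻¹ ≤ 2 * √y :=
  calc ∑ p ∈ primesIn x y, (√p)⁻¹ ≤ ∑ n ∈ Finset.range (⌊y⌋₊ + 1), (√n)⁻¹ :=
        Finset.sum_le_sum_of_subset_of_nonneg (Finset.filter_subset _ _)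
          fun _ _ _ => inv_nonneg.2 (Real.sqrt_nonneg _)
    _ ≤ 2 * √⌊y⌋₊ := sum_range_inv_sqrt_le _
    _ ≤ 2 * √y := by gcongr; exact Nat.floor_le hy

lemma re_natCast_cpow_neg_half_sub (p : ℕ) (t : ℝ) :
    ((p : ℂ) ^ (-(1 / 2 : ℂ) - t * I)).re = (√p)⁻¹ * Real.cos (Real.log p * t) := by
  rcases p.eq_zero_or_pos with rfl | hp
  · rw [Nat.cast_zero, zero_cpow fun h => by simpa using congrArg re h]
    simp
  have hp' : (0 : ℝ) < p := by exact_mod_cast hp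
  rw [← ofReal_natCast, re_ofReal_cpow hp', Real.sqrt_eq_rpow, ← Real.rpow_neg hp'.le]
  simp [mul_comm t]

lemma abs_integral_sq_sum_primesIn_cos_sub_le (x : ℝ) {y : ℝ} (hy : 0 < y) (u v : ℝ) :
    |(∫ t in u..v, (∑ p ∈ primesIn x y, (√(p : ℝ))⁻¹ * Real.cos (Real.log p * t)) ^ 2)
        - (v - u) / 2 * ∑ p ∈ primesIn x y, (1 : ℝ) / p| ≤ 4 * y * (y + 1) := by
  have hP : ∀ p ∈ primesIn x y, 2 ≤ p ∧ (p : ℝ) ≤ y := fun p hp =>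
    ⟨(Finset.mem_filter.1 hp).2.1.two_le, (Finset.mem_filter.1 hp).2.2.2⟩
  have hmain := abs_integral_sq_sum_cos_sub_le (primesIn x y) (fun p => (√(p : ℝ))⁻¹)
    (fun p => Real.log p) (Real.log_pos one_lt_two)
    (fun p hp => Real.log_le_log two_pos (by exact_mod_cast (hP p hp).1)) (inv_pos.2 hy)
    (fun p hp q hq hpq => inv_le_abs_log_sub_log (by linarith [hP p hp]) (by linarith [hP q hq])
      hpq (hP p hp).2 (hP q hq).2) u v
  have hsq (p : ℕ) : ((√(p : ℝ))⁻¹) ^ 2 = 1 / p := by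
    rw [inv_pow, Real.sq_sqrt p.cast_nonneg, one_div]
  have habs (p : ℕ) : |(√(p : ℝ))⁻¹| = (√p)⁻¹ := abs_of_nonneg (by positivity)
  simp only [hsq, habs, inv_inv] at hmain
  refine hmain.trans ?_
  have hsum := sum_primesIn_inv_sqrt_le x hy.le
  have hlog2 : (2 * Real.log 2)⁻¹ ≤ 1 := inv_le_one_of_one_le₀ (by linarith [Real.log_two_gt_d9])
  calc _ ≤ (2 * √y) ^ 2 * (y + 1) := by gcongr
    _ = 4 * y * (y + 1) := by rw [mul_pow, Real.sq_sqrt hy.le]; ring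

theorem stmt_4 :
    ∃ C : ℝ, 0 < C ∧
      ∀ (T x y : ℝ), 1 ≤ T → 2 ≤ x → x ≤ y →
        |(1 / T) * (∫ t in T..(2 * T),
              ((∑ p ∈ primesIn x y, (p : ℂ) ^ (-(1 / 2 : ℂ) - t * Complex.I)).re) ^ 2)
            - (1 / 2) * ∑ p ∈ primesIn x y, (1 : ℝ) / p|
          ≤ C * y ^ 2 / T := by
  refine ⟨6, by norm_num, fun T x y hT hx hxy => ?_⟩
  have hy : 2 ≤ y := hx.trans hxy
  have hT : 0 < T := by linarith
  have hbound := abs_integral_sq_sum_primesIn_cos_sub_le x (by linarith) T (2 * T)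
  simp_rw [re_sum, re_natCast_cpow_neg_half_sub]
  rw [show 2 * T - T = T by ring] at hbound
  rw [show ∀ J S : ℝ, 1 / T * J - 1 / 2 * S = T⁻¹ * (J - T / 2 * S) from fun J S => by
    field_simp, abs_mul, abs_of_pos (inv_pos.2 hT), div_eq_inv_mul _ T]
  gcongr
  calc _ ≤ 4 * y * (y + 1) := hbound
    _ ≤ 6 * y ^ 2 := by nlinarith
end

section
/- Let f : ℝ → ℂ be continuously differentiable on an interval [a, b] with b − a ≥ δ > 0. Then max_{t ∈ [a,b]} |f(t)|² ≤ (1/δ)∫_a^b |f(t)|² dt + 2 (∫_a^b |f(t)|² dt)^{1/2} (∫_a^b |f'(t)|² dt)^{1/2}. -/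
/-!
Write `g = ‖f‖²`, so that `g' = 2 ⟪f, f'⟫` and `|g'| ≤ 2 ‖f‖ ‖f'‖`. By the fundamental theorem of
calculus, `g t ≤ g s + ∫_a^b |g'|` for all `s, t ∈ [a, b]`; averaging over `s` gives
`g t ≤ (b - a)⁻¹ ∫_a^b g + ∫_a^b |g'|`, and Cauchy–Schwarz bounds the last integral.
-/

open MeasureTheory Set

section CauchySchwarz

variable {α E : Type*} [MeasurableSpace α] {μ : Measure α} [NormedAddCommGroup E]

theorem integral_norm_mul_norm_le_sqrt_mul_sqrt {f g : α → E} (hf : MemLp f 2 μ)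
    (hg : MemLp g 2 μ) :
    ∫ x, ‖f x‖ * ‖g x‖ ∂μ ≤ √(∫ x, ‖f x‖ ^ 2 ∂μ) * √(∫ x, ‖g x‖ ^ 2 ∂μ) := by
  have two : ENNReal.ofReal 2 = 2 := by norm_num
  have h := integral_mul_norm_le_Lp_mul_Lq Real.HolderConjugate.two_two (two ▸ hf) (two ▸ hg)
  simpa only [Real.rpow_two, ← Real.sqrt_eq_rpow] using h

theorem intervalIntegral.integral_norm_mul_norm_le_sqrt_mul_sqrt {a b : ℝ} {f g : ℝ → E}
    (hab : a ≤ b) (hf : ContinuousOn f (Icc a b)) (hg : ContinuousOn g (Icc a b)) :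
    ∫ x in a..b, ‖f x‖ * ‖g x‖ ≤ √(∫ x in a..b, ‖f x‖ ^ 2) * √(∫ x in a..b, ‖g x‖ ^ 2) := by
  have memLp : ∀ φ : ℝ → E, ContinuousOn φ (Icc a b) → MemLp φ 2 (volume.restrict (Ioc a b)) :=
    fun φ hφ ↦ (memLp_two_iff_integrable_sq_norm
      ((hφ.mono Ioc_subset_Icc_self).aestronglyMeasurable measurableSet_Ioc)).2
      ((hφ.norm.pow 2).integrableOn_Icc.mono_set Ioc_subset_Icc_self)
  simp only [intervalIntegral.integral_of_le hab]
  exact _root_.integral_norm_mul_norm_le_sqrt_mul_sqrt (memLp f hf) (memLp g hg)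

end CauchySchwarz

section FundamentalTheorem

variable {E : Type*} [NormedAddCommGroup E] [NormedSpace ℝ E] [CompleteSpace E]
  {g g' : ℝ → E} {a b : ℝ}

theorem norm_sub_le_integral_norm_deriv (hg : ContinuousOn g (Icc a b))
    (hderiv : ∀ x ∈ Ioo a b, HasDerivAt g (g' x) x) (hint : IntervalIntegrable g' volume a b)
    {s t : ℝ} (hs : s ∈ Icc a b) (ht : t ∈ Icc a b) :
    ‖g t - g s‖ ≤ ∫ x in a..b, ‖g' x‖ := by
  have hab : a ≤ b := hs.1.trans hs.2
  have hsub : uIcc s t ⊆ uIcc a b := by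
    rw [uIcc_of_le hab]; exact uIcc_subset_Icc hs ht
  have hIoo : Ioo (min s t) (max s t) ⊆ Ioo a b :=
    Ioo_subset_Ioo (le_min hs.1 ht.1) (max_le hs.2 ht.2)
  have hftc : ∫ x in s..t, g' x = g t - g s :=
    intervalIntegral.integral_eq_sub_of_hasDeriv_right (hg.mono (uIcc_of_le hab ▸ hsub))
      (fun x hx ↦ (hderiv x (hIoo hx)).hasDerivWithinAt) (hint.mono_set hsub)
  rw [← hftc]
  calc ‖∫ x in s..t, g' x‖ ≤ |∫ x in s..t, ‖g' x‖| :=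
        intervalIntegral.norm_integral_le_abs_integral_norm
    _ ≤ |∫ x in a..b, ‖g' x‖| :=
        intervalIntegral.abs_integral_mono_interval (uIoc_subset_uIoc_of_uIcc_subset_uIcc hsub)
          (Filter.Eventually.of_forall fun _ ↦ norm_nonneg _) hint.norm
    _ = ∫ x in a..b, ‖g' x‖ :=
        abs_of_nonneg (intervalIntegral.integral_nonneg hab fun _ _ ↦ norm_nonneg _)

end FundamentalTheorem

theorem le_integral_div_add_integral_norm_deriv {g g' : ℝ → ℝ} {a b : ℝ} (hab : a < b)
    (hg : ContinuousOn g (Icc a b)) (hderiv : ∀ x ∈ Ioo a b, HasDerivAt g (g' x) x)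
    (hint : IntervalIntegrable g' volume a b) {t : ℝ} (ht : t ∈ Icc a b) :
    g t ≤ (∫ x in a..b, g x) / (b - a) + ∫ x in a..b, ‖g' x‖ := by
  set H := ∫ x in a..b, ‖g' x‖
  have hpoint : ∀ s ∈ Icc a b, g t - H ≤ g s := fun s hs ↦ by
    have := (Real.le_norm_self _).trans (norm_sub_le_integral_norm_deriv hg hderiv hint hs ht)
    linarith
  have havg := intervalIntegral.integral_mono_on hab.le (intervalIntegrable_const (μ := volume))
    (hg.intervalIntegrable_of_Icc hab.le) hpoint
  rw [intervalIntegral.integral_const, smul_eq_mul] at havg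
  rw [← sub_le_iff_le_add, le_div_iff₀ (sub_pos.2 hab), mul_comm]
  exact havg

theorem stmt_13 (f : ℝ → ℂ) (a b δ : ℝ) (hδ : 0 < δ) (hab : δ ≤ b - a)
    (hf : ContDiffOn ℝ 1 f (Set.Icc a b)) :
    ∀ t ∈ Set.Icc a b,
      ‖f t‖ ^ 2
        ≤ (1 / δ) * (∫ s in a..b, ‖f s‖ ^ 2)
          + 2 * Real.sqrt (∫ s in a..b, ‖f s‖ ^ 2)
              * Real.sqrt (∫ s in a..b, ‖derivWithin f (Set.Icc a b) s‖ ^ 2) := by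
  intro t ht
  have hab' : a < b := by linarith
  set f' := derivWithin f (Icc a b)
  have hfc : ContinuousOn f (Icc a b) := hf.continuousOn
  have hf'c : ContinuousOn f' (Icc a b) :=
    hf.continuousOn_derivWithin (uniqueDiffOn_Icc hab') le_rfl
  have hderiv : ∀ x ∈ Ioo a b, HasDerivAt (‖f ·‖ ^ 2) (2 * inner ℝ (f x) (f' x)) x :=
    fun x hx ↦ ((hf.differentiableOn one_ne_zero x (Ioo_subset_Icc_self hx)).hasDerivWithinAt
      |>.hasDerivAt (Icc_mem_nhds hx.1 hx.2)).norm_sq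
  have hint : IntervalIntegrable (fun x ↦ 2 * inner ℝ (f x) (f' x)) volume a b :=
    (continuousOn_const.mul (hfc.inner hf'c)).intervalIntegrable_of_Icc hab'.le
  have hI : 0 ≤ ∫ s in a..b, ‖f s‖ ^ 2 :=
    intervalIntegral.integral_nonneg hab'.le fun _ _ ↦ by positivity
  calc ‖f t‖ ^ 2
      ≤ (∫ s in a..b, ‖f s‖ ^ 2) / (b - a) + ∫ x in a..b, ‖2 * inner ℝ (f x) (f' x)‖ :=
        le_integral_div_add_integral_norm_deriv hab' (hfc.norm.pow 2) hderiv hint ht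
    _ ≤ (1 / δ) * (∫ s in a..b, ‖f s‖ ^ 2) + 2 * ∫ x in a..b, ‖f x‖ * ‖f' x‖ := by
        gcongr ?_ + ?_
        · rw [one_div_mul_eq_div]; exact div_le_div_of_nonneg_left hI hδ hab
        · rw [← intervalIntegral.integral_const_mul]
          refine intervalIntegral.integral_mono_on hab'.le hint.norm
            ((continuousOn_const.mul (hfc.norm.mul hf'c.norm)).intervalIntegrable_of_Icc hab'.le)
            fun x _ ↦ ?_
          rw [norm_mul, Real.norm_two]
          gcongr
          exact norm_inner_le_norm _ _
    _ ≤ _ := by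
        rw [mul_assoc 2]
        gcongr
        exact intervalIntegral.integral_norm_mul_norm_le_sqrt_mul_sqrt hab'.le hfc hf'c
end
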